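/- Non-cooperative game, case d0 = d (mixed ε-equilibrium): assume v_min < v_max, 0 < d_x(x0,y0) = d < d_y(x0,y0) where d = T·(v_max − v_min) is the escape distance, and let 0 < ε < d. Let the mixed strategy X take the value v_min with probability 1 − 2ε/D and v_max with probability 2ε/D, and let Y take the value v_min with probability 2d/D and v_min + ε/T with probability 1 − 2d/D. Then (X, Y) is an ε-equilibrium: for every v ∈ Γ, E[u_x(x0, v, y0, Y)] ≤ E[u_x(x0, X, y0, Y)] + ε and E[u_y(x0, X, y0, v)] ≤ E[u_y(x0, X, y0, Y)] + ε, where each expectation is the corresponding finite weighted sum of utility values, X and Y being independent. -/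
import Mathlib


/-- The reduction of a real number `r` modulo the circuit length `D`: the relative
position on the torus, `(r) mod D = r − D·⌊r/D⌋ ∈ [0, D)`. -/
noncomputable def modD (D r : ℝ) : ℝ := r - D * (⌊r / D⌋ : ℝ)

/-- The directed (clockwise) distance from `x` to `y` on the circuit of length `D`. -/
noncomputable def dirX (D x y : ℝ) : ℝ := if x ≤ y then y - x else D + y - x

/-- The directed (clockwise) distance from `y` to `x` on the circuit of length `D`. -/
noncomputable def dirY (D x y : ℝ) : ℝ := dirX D y x

/-- Normalized utility (pλ = 1, c = 0) of player x: starting from `x0`, `y0` and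
driving at speeds `vx`, `vy` for time `T`. -/
noncomputable def uXn (D T x0 y0 vx vy : ℝ) : ℝ :=
  if modD D (x0 + T * vx) ≠ modD D (y0 + T * vy) then
    dirX D (modD D (x0 + T * vx)) (modD D (y0 + T * vy))
  else D / 2

/-- Normalized utility (pλ = 1, c = 0) of player y. -/
noncomputable def uYn (D T x0 y0 vx vy : ℝ) : ℝ :=
  if modD D (x0 + T * vx) ≠ modD D (y0 + T * vy) then
    dirY D (modD D (x0 + T * vx)) (modD D (y0 + T * vy))
  else D / 2

lemma modD_nonneg {D : ℝ} (hD : 0 < D) (r : ℝ) : 0 ≤ modD D r := by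
  have h : D * (⌊r / D⌋ : ℝ) ≤ D * (r / D) :=
    mul_le_mul_of_nonneg_left (Int.floor_le _) hD.le
  have h2 : D * (r / D) = r := by field_simp
  unfold modD; linarith

lemma modD_lt {D : ℝ} (hD : 0 < D) (r : ℝ) : modD D r < D := by
  have h : r / D < (⌊r / D⌋ : ℝ) + 1 := Int.lt_floor_add_one _
  have h2 : r < ((⌊r / D⌋ : ℝ) + 1) * D := (div_lt_iff₀ hD).mp h
  unfold modD; nlinarith

lemma modD_sub_exists (D T d x0 y0 vx vy : ℝ) (hdir : dirX D x0 y0 = d) :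
    ∃ n : ℤ, modD D (y0 + T * vy) - modD D (x0 + T * vx)
      = (d + T * vy - T * vx) - D * n := by
  unfold dirX at hdir
  by_cases h : x0 ≤ y0
  · rw [if_pos h] at hdir
    refine ⟨⌊(y0 + T * vy) / D⌋ - ⌊(x0 + T * vx) / D⌋, ?_⟩
    unfold modD; push_cast; linear_combination hdir
  · rw [if_neg h] at hdir
    refine ⟨⌊(y0 + T * vy) / D⌋ - ⌊(x0 + T * vx) / D⌋ + 1, ?_⟩
    unfold modD; push_cast; linear_combination hdir

lemma uXY_eq (D T d x0 y0 vx vy : ℝ) (hD : 0 < D) (hdir : dirX D x0 y0 = d)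
    (hs1 : 0 < d + T * vy - T * vx) (hs2 : d + T * vy - T * vx < D) :
    uXn D T x0 y0 vx vy = d + T * vy - T * vx ∧
    uYn D T x0 y0 vx vy = D - (d + T * vy - T * vx) := by
  obtain ⟨n, hn⟩ := modD_sub_exists D T d x0 y0 vx vy hdir
  have hu0 : 0 ≤ modD D (x0 + T * vx) := modD_nonneg hD _
  have huD : modD D (x0 + T * vx) < D := modD_lt hD _
  have hw0 : 0 ≤ modD D (y0 + T * vy) := modD_nonneg hD _
  have hwD : modD D (y0 + T * vy) < D := modD_lt hD _
  have hncase : n = 0 ∨ n = 1 := by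
    have h1 : (n : ℝ) < 2 := by nlinarith
    have h2 : (-1 : ℝ) < (n : ℝ) := by nlinarith
    have h1' : n < 2 := by exact_mod_cast h1
    have h2' : (-1 : ℤ) < n := by exact_mod_cast h2
    omega
  unfold uXn uYn dirY dirX
  set u := modD D (x0 + T * vx)
  set w := modD D (y0 + T * vy)
  rcases hncase with rfl | rfl
  · push_cast at hn
    have hlt : u < w := by linarith
    rw [if_pos hlt.ne, if_pos hlt.ne, if_pos hlt.le, if_neg (not_le.mpr hlt)]
    constructor <;> linarith
  · push_cast at hn
    have hlt : w < u := by linarith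
    rw [if_pos hlt.ne', if_pos hlt.ne', if_neg (not_le.mpr hlt), if_pos hlt.le]
    constructor <;> linarith

lemma uXY_meet (D T d x0 y0 vx vy : ℝ) (hD : 0 < D) (hdir : dirX D x0 y0 = d)
    (hs : d + T * vy - T * vx = 0) :
    uXn D T x0 y0 vx vy = D / 2 ∧ uYn D T x0 y0 vx vy = D / 2 := by
  obtain ⟨n, hn⟩ := modD_sub_exists D T d x0 y0 vx vy hdir
  have hu0 : 0 ≤ modD D (x0 + T * vx) := modD_nonneg hD _
  have huD : modD D (x0 + T * vx) < D := modD_lt hD _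
  have hw0 : 0 ≤ modD D (y0 + T * vy) := modD_nonneg hD _
  have hwD : modD D (y0 + T * vy) < D := modD_lt hD _
  have hn0 : n = 0 := by
    have h1 : (n : ℝ) < 1 := by nlinarith
    have h2 : (-1 : ℝ) < (n : ℝ) := by nlinarith
    have h1' : n < 1 := by exact_mod_cast h1
    have h2' : (-1 : ℤ) < n := by exact_mod_cast h2
    omega
  subst hn0
  push_cast at hn
  have heq : modD D (x0 + T * vx) = modD D (y0 + T * vy) := by linarith
  unfold uXn uYn
  rw [if_neg (by simpa using heq), if_neg (by simpa using heq)]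
  exact ⟨rfl, rfl⟩

set_option maxHeartbeats 1000000 in
/-- Non-cooperative game, case d₀ = d (mixed ε-equilibrium): when the initial minimal
distance equals the escape distance d = T·(v_max − v_min), the mixed strategies
X = v_min w.p. 1 − 2ε/D, v_max w.p. 2ε/D and Y = v_min w.p. 2d/D, v_min + ε/T
w.p. 1 − 2d/D form an ε-equilibrium; expectations are the corresponding finite
weighted sums with X and Y independent. -/
theorem threshold_mixed_eps_equilibrium
    (D T vmin vmax x0 y0 d ε : ℝ)
    (hD : 0 < D) (hvmin : 0 < vmin) (hvv : vmin < vmax) (hT : 0 < T)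
    (hshort : T * vmax < D / 2)
    (hx0 : x0 ∈ Set.Ico 0 D) (hy0 : y0 ∈ Set.Ico 0 D)
    (hd : d = T * (vmax - vmin))
    (hd0pos : 0 < dirX D x0 y0) (hd0 : dirX D x0 y0 = d) (hdy : d < dirY D x0 y0)
    (hε : 0 < ε) (hεd : ε < d) :
    (∀ v ∈ Set.Icc vmin vmax,
      (2 * d / D) * uXn D T x0 y0 v vmin
        + (1 - 2 * d / D) * uXn D T x0 y0 v (vmin + ε / T)
      ≤ ((1 - 2 * ε / D) * (2 * d / D) * uXn D T x0 y0 vmin vmin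
        + (1 - 2 * ε / D) * (1 - 2 * d / D) * uXn D T x0 y0 vmin (vmin + ε / T)
        + (2 * ε / D) * (2 * d / D) * uXn D T x0 y0 vmax vmin
        + (2 * ε / D) * (1 - 2 * d / D) * uXn D T x0 y0 vmax (vmin + ε / T)) + ε) ∧
    (∀ v ∈ Set.Icc vmin vmax,
      (1 - 2 * ε / D) * uYn D T x0 y0 vmin v + (2 * ε / D) * uYn D T x0 y0 vmax v
      ≤ ((1 - 2 * ε / D) * (2 * d / D) * uYn D T x0 y0 vmin vmin
        + (1 - 2 * ε / D) * (1 - 2 * d / D) * uYn D T x0 y0 vmin (vmin + ε / T)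
        + (2 * ε / D) * (2 * d / D) * uYn D T x0 y0 vmax vmin
        + (2 * ε / D) * (1 - 2 * d / D) * uYn D T x0 y0 vmax (vmin + ε / T)) + ε) := by
  have hTne : T ≠ 0 := hT.ne'
  have hdpos : 0 < d := hd0 ▸ hd0pos
  have hTv : T * vmax = T * vmin + d := by rw [hd]; ring
  have hTvmin : 0 < T * vmin := mul_pos hT hvmin
  have h2d : 2 * d < D := by nlinarith
  have hTε : T * (vmin + ε / T) = T * vmin + ε := by field_simp
  have H1 := uXY_eq D T d x0 y0 vmin vmin hD hd0 (by linarith) (by linarith)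
  have H2 := uXY_eq D T d x0 y0 vmin (vmin + ε / T) hD hd0
    (by rw [hTε]; linarith) (by rw [hTε]; linarith)
  rw [hTε] at H2
  have H3 := uXY_meet D T d x0 y0 vmax vmin hD hd0 (by linarith)
  have H4 := uXY_eq D T d x0 y0 vmax (vmin + ε / T) hD hd0
    (by rw [hTε]; linarith) (by rw [hTε]; linarith)
  rw [hTε] at H4
  have hk1 : (2 * ε / D) * (2 * d / D) * (D / 2) = 2 * ε * d / D := by
    field_simp
  have hk2 : (2 * ε / D) * D = 2 * ε := by field_simp
  have hk3 : (2 * d / D) * D = 2 * d := by field_simp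
  have hk4 : (2 * ε / D) * (2 * d / D) * D = 4 * ε * d / D := by
    field_simp; ring
  have hk5 : (2 * d / D) * (D / 2) = d := by field_simp
  have hk6 : (2 * ε / D) * (D / 2) = ε := by field_simp
  have e1x : uXn D T x0 y0 vmin vmin = d := by rw [H1.1]; ring
  have e2x : uXn D T x0 y0 vmin (vmin + ε / T) = d + ε := by rw [H2.1]; ring
  have e3x : uXn D T x0 y0 vmax vmin = D / 2 := H3.1
  have e4x : uXn D T x0 y0 vmax (vmin + ε / T) = ε := by rw [H4.1]; linarith
  have e1y : uYn D T x0 y0 vmin vmin = D - d := by rw [H1.2]; ring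
  have e2y : uYn D T x0 y0 vmin (vmin + ε / T) = D - (d + ε) := by rw [H2.2]; ring
  have e3y : uYn D T x0 y0 vmax vmin = D / 2 := H3.2
  have e4y : uYn D T x0 y0 vmax (vmin + ε / T) = D - ε := by rw [H4.2]; linarith
  constructor
  · intro v hv
    obtain ⟨hv1, hv2⟩ := hv
    have ht1 : T * vmin ≤ T * v := by nlinarith
    have ht2 : T * v ≤ T * vmax := by nlinarith
    have HB := uXY_eq D T d x0 y0 v (vmin + ε / T) hD hd0
      (by rw [hTε]; linarith) (by rw [hTε]; linarith)
    rw [hTε] at HB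
    have hsle : 0 ≤ d + T * vmin - T * v := by linarith
    rcases hsle.eq_or_lt with h0 | hpos
    · have HA := uXY_meet D T d x0 y0 v vmin hD hd0 (by linarith)
      have hbx : uXn D T x0 y0 v (vmin + ε / T) = ε := by rw [HB.1]; linarith
      rw [HA.1, hbx, e1x, e2x, e3x, e4x]
      have key : ((1 - 2 * ε / D) * (2 * d / D) * d
          + (1 - 2 * ε / D) * (1 - 2 * d / D) * (d + ε)
          + 2 * ε / D * (2 * d / D) * (D / 2) + 2 * ε / D * (1 - 2 * d / D) * ε) + ε
          - ((2 * d / D) * (D / 2) + (1 - 2 * d / D) * ε) = ε := by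
        field_simp; ring
      linarith [key]
    · have HA := uXY_eq D T d x0 y0 v vmin hD hd0 hpos (by linarith)
      have hbx : uXn D T x0 y0 v (vmin + ε / T) = d + ε - (T * v - T * vmin) := by
        rw [HB.1]; ring
      rw [HA.1, hbx, e1x, e2x, e3x, e4x]
      have key : ((1 - 2 * ε / D) * (2 * d / D) * d
          + (1 - 2 * ε / D) * (1 - 2 * d / D) * (d + ε)
          + 2 * ε / D * (2 * d / D) * (D / 2) + 2 * ε / D * (1 - 2 * d / D) * ε) + ε
          - ((2 * d / D) * (d + T * vmin - T * v)
            + (1 - 2 * d / D) * (d + ε - (T * v - T * vmin)))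
          = ε + (T * v - T * vmin) := by
        field_simp; ring
      linarith [key]
  · intro v hv
    obtain ⟨hv1, hv2⟩ := hv
    have ht1 : T * vmin ≤ T * v := by nlinarith
    have ht2 : T * v ≤ T * vmax := by nlinarith
    have HY1 := uXY_eq D T d x0 y0 vmin v hD hd0 (by linarith) (by linarith)
    have hsle : 0 ≤ d + T * v - T * vmax := by linarith
    rcases hsle.eq_or_lt with h0 | hpos
    · have HY2 := uXY_meet D T d x0 y0 vmax v hD hd0 (by linarith)
      have hy1 : uYn D T x0 y0 vmin v = D - d := by rw [HY1.2]; linarith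
      rw [hy1, HY2.2, e1y, e2y, e3y, e4y]
      have key : ((1 - 2 * ε / D) * (2 * d / D) * (D - d)
          + (1 - 2 * ε / D) * (1 - 2 * d / D) * (D - (d + ε))
          + 2 * ε / D * (2 * d / D) * (D / 2)
          + 2 * ε / D * (1 - 2 * d / D) * (D - ε)) + ε
          - ((1 - 2 * ε / D) * (D - d) + 2 * ε / D * (D / 2)) = ε := by
        field_simp; ring
      linarith [key]
    · have HY2 := uXY_eq D T d x0 y0 vmax v hD hd0 hpos (by linarith)
      have hy1 : uYn D T x0 y0 vmin v = D - d - (T * v - T * vmin) := by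
        rw [HY1.2]; ring
      have hy2 : uYn D T x0 y0 vmax v = D - (T * v - T * vmin) := by
        rw [HY2.2]; linarith
      rw [hy1, hy2, e1y, e2y, e3y, e4y]
      have key : ((1 - 2 * ε / D) * (2 * d / D) * (D - d)
          + (1 - 2 * ε / D) * (1 - 2 * d / D) * (D - (d + ε))
          + 2 * ε / D * (2 * d / D) * (D / 2)
          + 2 * ε / D * (1 - 2 * d / D) * (D - ε)) + ε
          - ((1 - 2 * ε / D) * (D - d - (T * v - T * vmin))
            + 2 * ε / D * (D - (T * v - T * vmin)))
          = T * v - T * vmin := by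
        field_simp; ring
      linarith [key]
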